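/- arXiv:2305.18882 — 3 statements merged into one kernel-verified Lean document; each statement's English description precedes it below -/
import Mathlib

section
/- Let X be a finite set of cardinality n, C > 1/n with m := 1/C a positive integer and m < n. Suppose S is a probability distribution on X that is 'non-uniform' in the sense that there exists a subset J ⊆ X with ∑_{x∈J} S(x) < |J|/n. Then there exists a C-bounded probability distribution Z on X (Z(x) ≤ C for all x) and a subset J' ⊆ X such that ∑_{x∈J'}(Z(x) − S(x)) > 1 − 1/(C·n). Consequently sup over C-bounded Z of d1(Z,S) is strictly greater than sup over C-bounded Z of d1(Z, uniform), which equals 2(1 − 1/(C·n)). -/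
private lemma forced_eq {X : Type*} {s : Finset X} {f : X → ℝ} {c : ℝ}
    (hle : ∀ x ∈ s, f x ≤ c) (hsum : (s.card : ℝ) * c ≤ ∑ x ∈ s, f x) :
    ∀ x ∈ s, f x = c := by
  by_contra h
  push_neg at h
  obtain ⟨x, hx, hne⟩ := h
  have hlt : ∑ y ∈ s, f y < ∑ _y ∈ s, c :=
    Finset.sum_lt_sum hle ⟨x, hx, lt_of_le_of_ne (hle x hx) hne⟩
  rw [Finset.sum_const, nsmul_eq_mul] at hlt
  linarith



/-- Variation divergence: `d1(P,Q) = 2 · sup_{J ⊆ X} |∑_{x∈J} (P x − Q x)|`. -/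
noncomputable def d1 {X : Type*} [Fintype X] (P Q : X → ℝ) : ℝ :=
  2 * ((Finset.univ : Finset X).powerset.sup'
    ⟨∅, Finset.empty_mem_powerset _⟩
    fun J => |∑ x ∈ J, (P x - Q x)|)

private lemma d1_le
 {X : Type*} [Fintype X] (P Q : X → ℝ) (a : ℝ)
    (h : ∀ J : Finset X, |∑ x ∈ J, (P x - Q x)| ≤ a) : d1 P Q ≤ 2 * a := by
  unfold d1
  exact mul_le_mul_of_nonneg_left (Finset.sup'_le _ _ fun J _ => h J) (by norm_num)

private lemma le_d1 {X : Type*} [Fintype X] (P Q : X → ℝ) (J : Finset X) :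
    2 * |∑ x ∈ J, (P x - Q x)| ≤ d1 P Q := by
  unfold d1
  exact mul_le_mul_of_nonneg_left
    (Finset.le_sup' (fun J => |∑ x ∈ J, (P x - Q x)|)
      (Finset.mem_powerset.mpr (Finset.subset_univ J))) (by norm_num)

/-- If `S` is a non-uniform probability distribution (some subset `J` has mass less than
`|J|/n`), then some `C`-bounded distribution `Z` deviates from `S` on some subset by more
than `1 − 1/(C n)`; consequently the worst-case variation divergence against `C`-bounded
test distributions is strictly larger for `S` than for the uniform distribution, the
latter supremum being `2 (1 − 1/(C n))`. -/
theorem stmt3 {X : Type*} [Fintype X] [Nonempty X]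
    (n : ℕ) (hn : n = Fintype.card X)
    (C : ℝ) (hC : 1 / (n : ℝ) < C)
    (m : ℕ) (hm : 0 < m) (hmC : (m : ℝ) = 1 / C) (hmn : m < n)
    (S : X → ℝ) (hS0 : ∀ x, 0 ≤ S x) (hS1 : ∑ x, S x = 1)
    (hnonunif : ∃ J : Finset X, ∑ x ∈ J, S x < (J.card : ℝ) / (n : ℝ)) :
    (∃ Z : X → ℝ, (∀ x, 0 ≤ Z x) ∧ (∑ x, Z x = 1) ∧ (∀ x, Z x ≤ C) ∧
        ∃ J' : Finset X, 1 - 1 / (C * n) < ∑ x ∈ J', (Z x - S x)) ∧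
    sSup { d : ℝ | ∃ Z : X → ℝ, (∀ x, 0 ≤ Z x) ∧ (∑ x, Z x = 1) ∧
          (∀ x, Z x ≤ C) ∧ d = d1 Z (fun _ => 1 / (n : ℝ)) } <
      sSup { d : ℝ | ∃ Z : X → ℝ, (∀ x, 0 ≤ Z x) ∧ (∑ x, Z x = 1) ∧
          (∀ x, Z x ≤ C) ∧ d = d1 Z S } ∧
    sSup { d : ℝ | ∃ Z : X → ℝ, (∀ x, 0 ≤ Z x) ∧ (∑ x, Z x = 1) ∧
          (∀ x, Z x ≤ C) ∧ d = d1 Z (fun _ => 1 / (n : ℝ)) } =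
      2 * (1 - 1 / (C * n)) := by
  classical
  obtain ⟨J0, hJ0⟩ := hnonunif
  have hnpos : 0 < n := hn ▸ Fintype.card_pos
  have hnR : (0:ℝ) < n := by exact_mod_cast hnpos
  have hCpos : 0 < C := lt_trans (by positivity) hC
  have hmR : (0:ℝ) < m := by exact_mod_cast hm
  have hmCn : (m:ℝ) * C = 1 := by rw [hmC]; field_simp
  have hmnR : (m:ℝ) < n := by exact_mod_cast hmn
  have hinv : (1:ℝ) / (C * n) = (m:ℝ) / n := by rw [hmC, div_div]
  set 𝒯 : Finset (Finset X) := Finset.univ.powerset.filter (fun t => t.card = m) with h𝒯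
  have h𝒯ne : 𝒯.Nonempty := by
    obtain ⟨t, _ht, htc⟩ := Finset.exists_subset_card_eq
      (show m ≤ (Finset.univ : Finset X).card by rw [Finset.card_univ, ← hn]; exact hmn.le)
    exact ⟨t, by simp [h𝒯, htc]⟩
  obtain ⟨T, hT𝒯, hTmin⟩ := Finset.exists_min_image 𝒯 (fun t => ∑ x ∈ t, S x) h𝒯ne
  have hTcard : T.card = m := by simpa [h𝒯] using hT𝒯
  have hswap : ∀ y ∉ T, ∀ x ∈ T, S x ≤ S y := by
    intro y hy x hx
    have hyT' : y ∉ T.erase x := fun h => hy (Finset.mem_of_mem_erase h)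
    have hcard : (insert y (T.erase x)).card = m := by
      rw [Finset.card_insert_of_notMem hyT', Finset.card_erase_of_mem hx, hTcard]
      omega
    have hmem : insert y (T.erase x) ∈ 𝒯 := by simp [h𝒯, hcard]
    have h2 := hTmin _ hmem
    rw [Finset.sum_insert hyT', Finset.sum_erase_eq_sub hx] at h2
    linarith
  -- the key strict inequality
  have hTlt : ∑ x ∈ T, S x < (m:ℝ)/n := by
    by_contra hge
    push_neg at hge
    have hTne : T.Nonempty := Finset.card_pos.mp (by rw [hTcard]; exact hm)
    -- some element of T is at least the average
    have hex : ∃ x ∈ T, (∑ z ∈ T, S z)/m ≤ S x := by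
      by_contra hall
      push_neg at hall
      have hlt := Finset.sum_lt_sum_of_nonempty hTne hall
      rw [Finset.sum_const, hTcard, nsmul_eq_mul] at hlt
      have heq : (m:ℝ) * ((∑ z ∈ T, S z)/m) = ∑ z ∈ T, S z := by field_simp
      linarith
    obtain ⟨x0, hx0T, hx0⟩ := hex
    have hout : ∀ y ∉ T, 1/(n:ℝ) ≤ S y := by
      intro y hy
      have h1 : (m:ℝ) ≤ (∑ z ∈ T, S z) * n := (div_le_iff₀ hnR).mp hge
      have h2 : 1/(n:ℝ) ≤ (∑ z ∈ T, S z)/m := by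
        rw [div_le_div_iff₀ hnR hmR]; linarith
      exact h2.trans (hx0.trans (hswap y hy x0 hx0T))
    have hcompl : ∑ y ∈ Tᶜ, S y = 1 - ∑ x ∈ T, S x := by
      have h := Finset.sum_add_sum_compl T S
      rw [hS1] at h; linarith
    have hccard : (Tᶜ.card : ℝ) = (n:ℝ) - m := by
      rw [Finset.card_compl, hTcard, ← hn]
      push_cast [Nat.cast_sub hmn.le]
      ring
    have hclb : (Tᶜ.card : ℝ) * (1/(n:ℝ)) ≤ ∑ y ∈ Tᶜ, S y := by
      have := Finset.card_nsmul_le_sum Tᶜ S (1/(n:ℝ))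
        (fun y hy => hout y (Finset.mem_compl.mp hy))
      rwa [nsmul_eq_mul] at this
    rw [hccard, hcompl] at hclb
    -- forces equality: ∑_T S = m/n
    have haeq : ∑ x ∈ T, S x = (m:ℝ)/n := by
      have h : ((n:ℝ) - m) * (1/n) = 1 - m/n := by field_simp
      rw [h] at hclb
      linarith
    -- every y ∉ T has S y = 1/n
    have houteq : ∀ y ∈ Tᶜ, -S y = -(1/(n:ℝ)) :=
      forced_eq (fun y hy => neg_le_neg (hout y (Finset.mem_compl.mp hy)))
        (by
          rw [Finset.sum_neg_distrib, hccard, hcompl, haeq]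
          have h : ((n:ℝ) - m) * (-(1/n)) = -(1 - (m:ℝ)/n) := by field_simp
          rw [h])
    -- every x ∈ T has S x = 1/n
    have hTcne : Tᶜ.Nonempty := by
      rw [← Finset.card_pos, Finset.card_compl, hTcard, ← hn]; omega
    obtain ⟨y0, hy0⟩ := hTcne
    have hy0n : S y0 = 1/(n:ℝ) := by
      have := houteq y0 hy0; linarith
    have hineq : ∀ x ∈ T, S x = 1/(n:ℝ) :=
      forced_eq (fun x hx => hy0n ▸ hswap y0 (Finset.mem_compl.mp hy0) x hx)
        (by rw [hTcard, haeq]; rw [mul_one_div])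
    have hSunif : ∀ x, S x = 1/(n:ℝ) := by
      intro x
      by_cases hx : x ∈ T
      · exact hineq x hx
      · have := houteq x (Finset.mem_compl.mpr hx); linarith
    have : ∑ x ∈ J0, S x = (J0.card : ℝ)/n := by
      rw [Finset.sum_congr rfl (fun x _ => hSunif x), Finset.sum_const, nsmul_eq_mul,
        mul_one_div]
    linarith
  -- the C-bounded distribution concentrated on T
  set Z : X → ℝ := fun x => if x ∈ T then C else 0 with hZdef
  have hZ0 : ∀ x, 0 ≤ Z x := by
    intro x; by_cases h : x ∈ T <;> simp [hZdef, h, hCpos.le]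
  have hZb : ∀ x, Z x ≤ C := by
    intro x; by_cases h : x ∈ T <;> simp [hZdef, h, hCpos.le]
  have hZT : ∑ x ∈ T, Z x = 1 := by
    have h : ∑ x ∈ T, Z x = ∑ _x ∈ T, C :=
      Finset.sum_congr rfl (fun x hx => by simp [hZdef, hx])
    rw [h, Finset.sum_const, hTcard, nsmul_eq_mul, hmCn]
  have hZsum : ∑ x, Z x = 1 := by
    rw [hZdef]
    simp only [Finset.sum_ite_mem, Finset.univ_inter]
    rw [← hZT]
    exact Finset.sum_congr rfl (fun x hx => by simp [hZdef, hx])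
  have hdev : 1 - 1 / (C * n) < ∑ x ∈ T, (Z x - S x) := by
    rw [Finset.sum_sub_distrib, hZT, hinv]
    linarith
  -- upper bound lemma against uniform
  have hub : ∀ W : X → ℝ, (∀ x, 0 ≤ W x) → (∑ x, W x = 1) → (∀ x, W x ≤ C) →
      ∀ J : Finset X, ∑ x ∈ J, (W x - 1/(n:ℝ)) ≤ 1 - (m:ℝ)/n := by
    intro W hW0 hW1 hWb J
    rw [Finset.sum_sub_distrib, Finset.sum_const, nsmul_eq_mul]
    rcases le_or_gt J.card m with hk | hk
    · have h1 : ∑ x ∈ J, W x ≤ (J.card:ℝ) * C := by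
        calc ∑ x ∈ J, W x ≤ ∑ _x ∈ J, C := Finset.sum_le_sum (fun x _ => hWb x)
        _ = (J.card:ℝ) * C := by rw [Finset.sum_const, nsmul_eq_mul]
      have hkR : (J.card:ℝ) ≤ m := by exact_mod_cast hk
      have hCn : 0 ≤ C - 1/n := by linarith
      calc ∑ x ∈ J, W x - (J.card:ℝ) * (1/(n:ℝ)) ≤ (J.card:ℝ)*C - (J.card:ℝ)*(1/n) := by
            linarith
      _ = (J.card:ℝ) * (C - 1/n) := by ring
      _ ≤ (m:ℝ) * (C - 1/n) := mul_le_mul_of_nonneg_right hkR hCn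
      _ = 1 - (m:ℝ)/n := by rw [mul_sub, hmCn, mul_one_div]
    · have h1 : ∑ x ∈ J, W x ≤ 1 := by
        rw [← hW1]
        exact Finset.sum_le_sum_of_subset_of_nonneg (Finset.subset_univ J)
          (fun x _ _ => hW0 x)
      have hkR : (m:ℝ) ≤ J.card := by exact_mod_cast hk.le
      have h2 : (m:ℝ) * (1/n) ≤ (J.card:ℝ) * (1/n) :=
        mul_le_mul_of_nonneg_right hkR (by positivity)
      rw [mul_one_div] at h2
      linarith
  have habs : ∀ W : X → ℝ, (∀ x, 0 ≤ W x) → (∑ x, W x = 1) → (∀ x, W x ≤ C) →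
      ∀ J : Finset X, |∑ x ∈ J, (W x - 1/(n:ℝ))| ≤ 1 - (m:ℝ)/n := by
    intro W hW0 hW1 hWb J
    rw [abs_le]
    refine ⟨?_, hub W hW0 hW1 hWb J⟩
    have h1 := hub W hW0 hW1 hWb Jᶜ
    have h2 : ∑ x ∈ J, (W x - 1/(n:ℝ)) + ∑ x ∈ Jᶜ, (W x - 1/(n:ℝ)) = 0 := by
      rw [Finset.sum_add_sum_compl, Finset.sum_sub_distrib, hW1, Finset.sum_const,
        Finset.card_univ, ← hn, nsmul_eq_mul, mul_one_div, div_self hnR.ne']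
      ring
    linarith
  have hmn0 : (0:ℝ) ≤ 1 - (m:ℝ)/n := by
    have h : (m:ℝ)/n ≤ 1 := by rw [div_le_one hnR]; linarith
    linarith
  -- d1 of Z against uniform
  have hTpow : T ∈ (Finset.univ : Finset X).powerset :=
    Finset.mem_powerset.mpr (Finset.subset_univ T)
  have hd1ZU : d1 Z (fun _ => 1/(n:ℝ)) = 2 * (1 - (m:ℝ)/n) := by
    apply le_antisymm (d1_le _ _ _ (habs Z hZ0 hZsum hZb))
    have heq : |∑ x ∈ T, (Z x - 1/(n:ℝ))| = 1 - (m:ℝ)/n := by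
      rw [Finset.sum_sub_distrib, hZT, Finset.sum_const, hTcard, nsmul_eq_mul,
        mul_one_div, abs_of_nonneg hmn0]
    have hle := le_d1 Z (fun _ => 1/(n:ℝ)) T
    rw [heq] at hle
    exact hle
  set A := { d : ℝ | ∃ Z : X → ℝ, (∀ x, 0 ≤ Z x) ∧ (∑ x, Z x = 1) ∧
      (∀ x, Z x ≤ C) ∧ d = d1 Z (fun _ => 1 / (n : ℝ)) } with hA
  set B := { d : ℝ | ∃ Z : X → ℝ, (∀ x, 0 ≤ Z x) ∧ (∑ x, Z x = 1) ∧
      (∀ x, Z x ≤ C) ∧ d = d1 Z S } with hB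
  have hAmem : 2 * (1 - (m:ℝ)/n) ∈ A := ⟨Z, hZ0, hZsum, hZb, hd1ZU.symm⟩
  have hAub : ∀ d ∈ A, d ≤ 2 * (1 - (m:ℝ)/n) := by
    rintro d ⟨W, hW0, hW1, hWb, rfl⟩
    exact d1_le _ _ _ (habs W hW0 hW1 hWb)
  have hAeq : sSup A = 2 * (1 - (m:ℝ)/n) :=
    le_antisymm (csSup_le ⟨_, hAmem⟩ hAub) (le_csSup ⟨_, hAub⟩ hAmem)
  have hBub : ∀ d ∈ B, d ≤ 4 := by
    rintro d ⟨W, hW0, hW1, hWb, rfl⟩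
    have h : ∀ J : Finset X, |∑ x ∈ J, (W x - S x)| ≤ 2 := by
      intro J
      calc |∑ x ∈ J, (W x - S x)| ≤ ∑ x ∈ J, |W x - S x| :=
            Finset.abs_sum_le_sum_abs _ _
      _ ≤ ∑ x, |W x - S x| :=
            Finset.sum_le_sum_of_subset_of_nonneg (Finset.subset_univ J)
              (fun x _ _ => abs_nonneg _)
      _ ≤ ∑ x, (W x + S x) := Finset.sum_le_sum (fun x _ =>
            abs_le.mpr ⟨by linarith [hW0 x, hS0 x], by linarith [hW0 x, hS0 x]⟩)
      _ = 2 := by rw [Finset.sum_add_distrib, hW1, hS1]; norm_num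
    have h2 := d1_le W S 2 h
    linarith
  have hBmem : d1 Z S ∈ B := ⟨Z, hZ0, hZsum, hZb, rfl⟩
  have hBgt : 2 * (1 - (m:ℝ)/n) < d1 Z S := by
    have h0 : 1 - (m:ℝ)/n < ∑ x ∈ T, (Z x - S x) := by
      rw [Finset.sum_sub_distrib, hZT]; linarith
    have h1 : ∑ x ∈ T, (Z x - S x) ≤ |∑ x ∈ T, (Z x - S x)| := le_abs_self _
    have h2 := le_d1 Z S T
    linarith
  have hfin : sSup A < sSup B := by
    have h1 : d1 Z S ≤ sSup B := le_csSup ⟨4, hBub⟩ hBmem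
    linarith [hAeq ▸ (le_of_eq hAeq.symm)]
  refine ⟨⟨Z, hZ0, hZsum, hZb, T, hdev⟩, ?_, ?_⟩
  · rw [hAeq]; linarith [le_csSup (⟨4, hBub⟩ : BddAbove B) hBmem]
  · rw [hAeq, hinv]
end

section
/- Total variation between occupancy measures is controlled by per-state policy TV: in a finite MDP with discount γ ∈ [0,1), for any two policies π1, π2 with normalized discounted state-action occupancy measures ρ_{π1}, ρ_{π2} from a fixed initial state, D_TV(ρ_{π1}, ρ_{π2}) ≤ (1/(1−γ)) E_{s∼d_{π1}}[D_TV(π1(·|s), π2(·|s))], where d_{π1}(s) = (1−γ)∑_{t≥0} γ^t P(s_t = s | π1). -/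
open Finset

/-- State distribution at time `t` of the Markov chain induced by policy `π` and
transition kernel `P` starting at `s0`. -/
noncomputable def stateDist {S A : Type*} [Fintype S] [Fintype A] [DecidableEq S]
    (P : S → A → S → ℝ) (π : S → A → ℝ) (s0 : S) : ℕ → S → ℝ
  | 0, s => if s = s0 then 1 else 0
  | (t + 1), s => ∑ s' : S, ∑ a : A, stateDist P π s0 t s' * π s' a * P s' a s

section aux

variable {S A : Type*} [Fintype S] [Fintype A] [DecidableEq S]

lemma sd_nonneg (P : S → A → S → ℝ) (π : S → A → ℝ) (s0 : S)
    (hP : ∀ s a, (∀ s', 0 ≤ P s a s') ∧ ∑ s', P s a s' = 1)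
    (hπ : ∀ s, (∀ a, 0 ≤ π s a) ∧ ∑ a, π s a = 1) :
    ∀ t s, 0 ≤ stateDist P π s0 t s := by
  intro t
  induction t with
  | zero => intro s; simp only [stateDist]; split <;> norm_num
  | succ t ih =>
      intro s
      simp only [stateDist]
      refine Finset.sum_nonneg fun s' _ => Finset.sum_nonneg fun a _ => ?_
      exact mul_nonneg (mul_nonneg (ih s') ((hπ s').1 a)) ((hP s' a).1 s)

lemma sd_sum (P : S → A → S → ℝ) (π : S → A → ℝ) (s0 : S)
    (hP : ∀ s a, (∀ s', 0 ≤ P s a s') ∧ ∑ s', P s a s' = 1)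
    (hπ : ∀ s, (∀ a, 0 ≤ π s a) ∧ ∑ a, π s a = 1) :
    ∀ t, ∑ s, stateDist P π s0 t s = 1 := by
  intro t
  induction t with
  | zero => simp [stateDist]
  | succ t ih =>
      simp only [stateDist]
      rw [Finset.sum_comm]
      have : ∀ s' : S, ∑ s : S, ∑ a : A, stateDist P π s0 t s' * π s' a * P s' a s
          = stateDist P π s0 t s' := by
        intro s'
        rw [Finset.sum_comm]
        have h1 : ∀ a : A, ∑ s : S, stateDist P π s0 t s' * π s' a * P s' a s
            = stateDist P π s0 t s' * π s' a := by
          intro a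
          rw [← Finset.mul_sum, (hP s' a).2, mul_one]
        rw [Finset.sum_congr rfl fun a _ => h1 a, ← Finset.mul_sum, (hπ s').2, mul_one]
      rw [Finset.sum_congr rfl fun s' _ => this s', ih]

lemma sd_le_one (P : S → A → S → ℝ) (π : S → A → ℝ) (s0 : S)
    (hP : ∀ s a, (∀ s', 0 ≤ P s a s') ∧ ∑ s', P s a s' = 1)
    (hπ : ∀ s, (∀ a, 0 ≤ π s a) ∧ ∑ a, π s a = 1) :
    ∀ t s, stateDist P π s0 t s ≤ 1 := by
  intro t s
  calc stateDist P π s0 t s ≤ ∑ s', stateDist P π s0 t s' :=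
        Finset.single_le_sum (fun s' _ => sd_nonneg P π s0 hP hπ t s') (Finset.mem_univ s)
    _ = 1 := sd_sum P π s0 hP hπ t

lemma absdec (x1 x2 y1 y2 : ℝ) (hx1 : 0 ≤ x1) (hy2 : 0 ≤ y2) :
    |x1 * y1 - x2 * y2| ≤ x1 * |y1 - y2| + |x1 - x2| * y2 := by
  have h : x1 * y1 - x2 * y2 = x1 * (y1 - y2) + (x1 - x2) * y2 := by ring
  rw [h]
  calc |x1 * (y1 - y2) + (x1 - x2) * y2| ≤ |x1 * (y1 - y2)| + |(x1 - x2) * y2| := abs_add_le _ _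
    _ = x1 * |y1 - y2| + |x1 - x2| * y2 := by
        rw [abs_mul, abs_mul, abs_of_nonneg hx1, abs_of_nonneg hy2]

lemma rowbound (x1 x2 : ℝ) (q1 q2 : A → ℝ) (hx1 : 0 ≤ x1)
    (hq2 : ∀ a, 0 ≤ q2 a) (hq2s : ∑ a, q2 a = 1) :
    ∑ a, |x1 * q1 a - x2 * q2 a| ≤ x1 * (∑ a, |q1 a - q2 a|) + |x1 - x2| := by
  calc ∑ a, |x1 * q1 a - x2 * q2 a|
      ≤ ∑ a, (x1 * |q1 a - q2 a| + |x1 - x2| * q2 a) :=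
        Finset.sum_le_sum fun a _ => absdec x1 x2 (q1 a) (q2 a) hx1 (hq2 a)
    _ = x1 * (∑ a, |q1 a - q2 a|) + |x1 - x2| * ∑ a, q2 a := by
        rw [Finset.sum_add_distrib, ← Finset.mul_sum, ← Finset.mul_sum]
    _ = x1 * (∑ a, |q1 a - q2 a|) + |x1 - x2| := by rw [hq2s, mul_one]

end aux

set_option maxHeartbeats 4000000 in
/-- Total variation between normalized discounted occupancy measures of two policies is
controlled by the discounted expected per-state policy total variation under the first
policy's discounted state occupancy. -/
theorem stmt11 {S A : Type*} [Fintype S] [Fintype A] [DecidableEq S]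
    (P : S → A → S → ℝ) (π1 π2 : S → A → ℝ) (s0 : S) (γ : ℝ)
    (hγ0 : 0 ≤ γ) (hγ1 : γ < 1)
    (hP : ∀ s a, (∀ s', 0 ≤ P s a s') ∧ ∑ s', P s a s' = 1)
    (hπ1 : ∀ s, (∀ a, 0 ≤ π1 s a) ∧ ∑ a, π1 s a = 1)
    (hπ2 : ∀ s, (∀ a, 0 ≤ π2 s a) ∧ ∑ a, π2 s a = 1) :
    (1 / 2) * ∑ s, ∑ a,
        |(1 - γ) * (∑' t : ℕ, γ ^ t * stateDist P π1 s0 t s) * π1 s a -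
          (1 - γ) * (∑' t : ℕ, γ ^ t * stateDist P π2 s0 t s) * π2 s a| ≤
      (1 / (1 - γ)) * ∑ s,
        ((1 - γ) * (∑' t : ℕ, γ ^ t * stateDist P π1 s0 t s)) *
          ((1 / 2) * ∑ a, |π1 s a - π2 s a|) := by
  have hg : (0:ℝ) < 1 - γ := by linarith
  set p1 := stateDist P π1 s0 with hp1
  set p2 := stateDist P π2 s0 with hp2
  have h1n : ∀ t s, 0 ≤ p1 t s := sd_nonneg P π1 s0 hP hπ1
  have h2n : ∀ t s, 0 ≤ p2 t s := sd_nonneg P π2 s0 hP hπ2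
  have h1s : ∀ t, ∑ s, p1 t s = 1 := sd_sum P π1 s0 hP hπ1
  have h2s : ∀ t, ∑ s, p2 t s = 1 := sd_sum P π2 s0 hP hπ2
  have h1le : ∀ t s, p1 t s ≤ 1 := sd_le_one P π1 s0 hP hπ1
  have h2le : ∀ t s, p2 t s ≤ 1 := sd_le_one P π2 s0 hP hπ2
  set c : S → ℝ := fun s => ∑ a, |π1 s a - π2 s a| with hc
  have hc0 : ∀ s, 0 ≤ c s := fun s => Finset.sum_nonneg fun a _ => abs_nonneg _
  have hc2 : ∀ s, c s ≤ 2 := by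
    intro s
    calc c s ≤ ∑ a, (π1 s a + π2 s a) := by
          refine Finset.sum_le_sum fun a _ => ?_
          calc |π1 s a - π2 s a| ≤ |π1 s a| + |π2 s a| := abs_sub _ _
            _ = π1 s a + π2 s a := by
                rw [abs_of_nonneg ((hπ1 s).1 a), abs_of_nonneg ((hπ2 s).1 a)]
      _ = 2 := by rw [Finset.sum_add_distrib, (hπ1 s).2, (hπ2 s).2]; norm_num
  set ε : ℕ → ℝ := fun t => ∑ s, p1 t s * c s with hε
  set e : ℕ → ℝ := fun t => ∑ s, |p1 t s - p2 t s| with he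
  have hε0 : ∀ t, 0 ≤ ε t := fun t =>
    Finset.sum_nonneg fun s _ => mul_nonneg (h1n t s) (hc0 s)
  have hε2 : ∀ t, ε t ≤ 2 := by
    intro t
    calc ε t ≤ ∑ s, p1 t s * 2 :=
          Finset.sum_le_sum fun s _ => mul_le_mul_of_nonneg_left (hc2 s) (h1n t s)
      _ = 2 := by rw [← Finset.sum_mul, h1s t]; norm_num
  have he0 : ∀ t, 0 ≤ e t := fun t => Finset.sum_nonneg fun s _ => abs_nonneg _
  have he2 : ∀ t, e t ≤ 2 := by
    intro t
    calc e t ≤ ∑ s, (p1 t s + p2 t s) := by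
          refine Finset.sum_le_sum fun s _ => ?_
          calc |p1 t s - p2 t s| ≤ |p1 t s| + |p2 t s| := abs_sub _ _
            _ = p1 t s + p2 t s := by rw [abs_of_nonneg (h1n t s), abs_of_nonneg (h2n t s)]
      _ = 2 := by rw [Finset.sum_add_distrib, h1s t, h2s t]; norm_num
  have hgeo : Summable (fun t : ℕ => γ ^ t) := summable_geometric_of_lt_one hγ0 hγ1
  have hgt : ∀ t : ℕ, (0:ℝ) ≤ γ ^ t := fun t => pow_nonneg hγ0 t
  -- summabilities
  have hsumε : Summable (fun t => γ ^ t * ε t) := by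
    refine Summable.of_nonneg_of_le (fun t => mul_nonneg (hgt t) (hε0 t))
      (fun t => ?_) (hgeo.mul_left 2)
    calc γ ^ t * ε t ≤ γ ^ t * 2 := mul_le_mul_of_nonneg_left (hε2 t) (hgt t)
      _ = 2 * γ ^ t := by ring
  have hsume : Summable (fun t => γ ^ t * e t) := by
    refine Summable.of_nonneg_of_le (fun t => mul_nonneg (hgt t) (he0 t))
      (fun t => ?_) (hgeo.mul_left 2)
    calc γ ^ t * e t ≤ γ ^ t * 2 := mul_le_mul_of_nonneg_left (he2 t) (hgt t)
      _ = 2 * γ ^ t := by ring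
  have hs1 : ∀ s, Summable (fun t => γ ^ t * p1 t s) := by
    intro s
    refine Summable.of_nonneg_of_le (fun t => mul_nonneg (hgt t) (h1n t s))
      (fun t => ?_) hgeo
    calc γ ^ t * p1 t s ≤ γ ^ t * 1 := mul_le_mul_of_nonneg_left (h1le t s) (hgt t)
      _ = γ ^ t := mul_one _
  have hs2 : ∀ s, Summable (fun t => γ ^ t * p2 t s) := by
    intro s
    refine Summable.of_nonneg_of_le (fun t => mul_nonneg (hgt t) (h2n t s))
      (fun t => ?_) hgeo
    calc γ ^ t * p2 t s ≤ γ ^ t * 1 := mul_le_mul_of_nonneg_left (h2le t s) (hgt t)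
      _ = γ ^ t := mul_one _
  have habs : ∀ s, Summable (fun t => γ ^ t * |p1 t s - p2 t s|) := by
    intro s
    refine Summable.of_nonneg_of_le (fun t => mul_nonneg (hgt t) (abs_nonneg _))
      (fun t => ?_) (hgeo.mul_left 2)
    have : |p1 t s - p2 t s| ≤ 2 := by
      calc |p1 t s - p2 t s| ≤ |p1 t s| + |p2 t s| := abs_sub _ _
        _ ≤ 2 := by
            rw [abs_of_nonneg (h1n t s), abs_of_nonneg (h2n t s)]
            linarith [h1le t s, h2le t s]
    calc γ ^ t * |p1 t s - p2 t s| ≤ γ ^ t * 2 := mul_le_mul_of_nonneg_left this (hgt t)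
      _ = 2 * γ ^ t := by ring
  set E := ∑' t, γ ^ t * ε t with hE
  set X := ∑' t, γ ^ t * e t with hX
  have hE0 : 0 ≤ E := tsum_nonneg fun t => mul_nonneg (hgt t) (hε0 t)
  -- recursion: e (t+1) ≤ ε t + e t
  have hrec : ∀ t, e (t + 1) ≤ ε t + e t := by
    intro t
    have hstep : ∀ s, |p1 (t + 1) s - p2 (t + 1) s|
        ≤ ∑ s', ∑ a, |p1 t s' * π1 s' a - p2 t s' * π2 s' a| * P s' a s := by
      intro s
      have h1 : p1 (t + 1) s = ∑ s', ∑ a, p1 t s' * π1 s' a * P s' a s := by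
        rw [hp1]; rfl
      have h2 : p2 (t + 1) s = ∑ s', ∑ a, p2 t s' * π2 s' a * P s' a s := by
        rw [hp2]; rfl
      rw [h1, h2, ← Finset.sum_sub_distrib]
      calc |∑ s', (∑ a, p1 t s' * π1 s' a * P s' a s - ∑ a, p2 t s' * π2 s' a * P s' a s)|
          ≤ ∑ s', |∑ a, p1 t s' * π1 s' a * P s' a s - ∑ a, p2 t s' * π2 s' a * P s' a s| :=
            Finset.abs_sum_le_sum_abs _ _
        _ ≤ ∑ s', ∑ a, |p1 t s' * π1 s' a - p2 t s' * π2 s' a| * P s' a s := by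
            refine Finset.sum_le_sum fun s' _ => ?_
            rw [← Finset.sum_sub_distrib]
            calc |∑ a, (p1 t s' * π1 s' a * P s' a s - p2 t s' * π2 s' a * P s' a s)|
                ≤ ∑ a, |p1 t s' * π1 s' a * P s' a s - p2 t s' * π2 s' a * P s' a s| :=
                  Finset.abs_sum_le_sum_abs _ _
              _ = ∑ a, |p1 t s' * π1 s' a - p2 t s' * π2 s' a| * P s' a s := by
                  refine Finset.sum_congr rfl fun a _ => ?_
                  rw [← sub_mul, abs_mul, abs_of_nonneg ((hP s' a).1 s)]
    calc e (t + 1) ≤ ∑ s, ∑ s', ∑ a, |p1 t s' * π1 s' a - p2 t s' * π2 s' a| * P s' a s :=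
          Finset.sum_le_sum fun s _ => hstep s
      _ = ∑ s', ∑ a, |p1 t s' * π1 s' a - p2 t s' * π2 s' a| := by
          rw [Finset.sum_comm]
          refine Finset.sum_congr rfl fun s' _ => ?_
          rw [Finset.sum_comm]
          refine Finset.sum_congr rfl fun a _ => ?_
          rw [← Finset.mul_sum, (hP s' a).2, mul_one]
      _ ≤ ∑ s', (p1 t s' * c s' + |p1 t s' - p2 t s'|) :=
          Finset.sum_le_sum fun s' _ =>
            rowbound (p1 t s') (p2 t s') (π1 s') (π2 s') (h1n t s') ((hπ2 s').1) ((hπ2 s').2)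
      _ = ε t + e t := by rw [Finset.sum_add_distrib]
  -- discounted recursion: (1-γ) X ≤ γ E
  have he0z : e 0 = 0 := by
    rw [he]
    refine Finset.sum_eq_zero fun s _ => ?_
    have : p1 0 s = p2 0 s := by rw [hp1, hp2]; rfl
    rw [this, sub_self, abs_zero]
  have hshift : Summable (fun t : ℕ => γ ^ (t + 1) * e (t + 1)) := by
    have := (summable_nat_add_iff 1).mpr hsume
    simpa using this
  have hXle : X ≤ γ * E + γ * X := by
    have h1 : X = e 0 + ∑' t, γ ^ (t + 1) * e (t + 1) := by
      rw [hX, Summable.tsum_eq_zero_add hsume]; norm_num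
    have h2 : ∑' t, γ ^ (t + 1) * e (t + 1) ≤ ∑' t, (γ * (γ ^ t * ε t) + γ * (γ ^ t * e t)) := by
      refine Summable.tsum_le_tsum (fun t => ?_) hshift ((hsumε.mul_left γ).add (hsume.mul_left γ))
      have : γ ^ (t + 1) * e (t + 1) ≤ γ ^ (t + 1) * (ε t + e t) :=
        mul_le_mul_of_nonneg_left (hrec t) (hgt (t + 1))
      calc γ ^ (t + 1) * e (t + 1) ≤ γ ^ (t + 1) * (ε t + e t) := this
        _ = γ * (γ ^ t * ε t) + γ * (γ ^ t * e t) := by ring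
    have h3 : ∑' t, (γ * (γ ^ t * ε t) + γ * (γ ^ t * e t)) = γ * E + γ * X := by
      rw [Summable.tsum_add (hsumε.mul_left γ) (hsume.mul_left γ), tsum_mul_left, tsum_mul_left]
    linarith [h1, h2, h3.le, h3.ge]
  have hXE : (1 - γ) * X ≤ γ * E := by nlinarith [hXle]
  -- key identities
  set d1 : S → ℝ := fun s => (1 - γ) * (∑' t : ℕ, γ ^ t * p1 t s) with hd1
  set d2 : S → ℝ := fun s => (1 - γ) * (∑' t : ℕ, γ ^ t * p2 t s) with hd2
  have hd1n : ∀ s, 0 ≤ d1 s := fun s =>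
    mul_nonneg hg.le (tsum_nonneg fun t => mul_nonneg (hgt t) (h1n t s))
  have hdc : ∑ s, d1 s * c s = (1 - γ) * E := by
    have h1 : ∀ s, d1 s * c s = (1 - γ) * ∑' t, γ ^ t * p1 t s * c s := by
      intro s
      rw [hd1, mul_assoc, tsum_mul_right]
    rw [Finset.sum_congr rfl fun s _ => h1 s, ← Finset.mul_sum]
    congr 1
    rw [← Summable.tsum_finsetSum (fun s _ => (hs1 s).mul_right (c s))]
    refine tsum_congr fun t => ?_
    rw [hε, Finset.mul_sum]
    exact Finset.sum_congr rfl fun s _ => by ring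
  have hdd : ∑ s, |d1 s - d2 s| ≤ (1 - γ) * X := by
    have h1 : ∀ s, |d1 s - d2 s| ≤ (1 - γ) * ∑' t, γ ^ t * |p1 t s - p2 t s| := by
      intro s
      rw [hd1, hd2, ← mul_sub, abs_mul, abs_of_nonneg hg.le]
      refine mul_le_mul_of_nonneg_left ?_ hg.le
      rw [← Summable.tsum_sub (hs1 s) (hs2 s)]
      calc |∑' t, (γ ^ t * p1 t s - γ ^ t * p2 t s)|
          ≤ ∑' t, |γ ^ t * p1 t s - γ ^ t * p2 t s| := by
            have hs : Summable (fun t => |γ ^ t * p1 t s - γ ^ t * p2 t s|) := by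
              refine (habs s).congr fun t => ?_
              rw [← mul_sub, abs_mul, abs_of_nonneg (hgt t)]
            have h := norm_tsum_le_tsum_norm
              (f := fun t : ℕ => γ ^ t * p1 t s - γ ^ t * p2 t s)
              (by simpa [Real.norm_eq_abs] using hs)
            simpa [Real.norm_eq_abs] using h
        _ = ∑' t, γ ^ t * |p1 t s - p2 t s| := by
            refine tsum_congr fun t => ?_
            rw [← mul_sub, abs_mul, abs_of_nonneg (hgt t)]
    calc ∑ s, |d1 s - d2 s| ≤ ∑ s, (1 - γ) * ∑' t, γ ^ t * |p1 t s - p2 t s| :=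
          Finset.sum_le_sum fun s _ => h1 s
      _ = (1 - γ) * X := by
          rw [← Finset.mul_sum]
          congr 1
          rw [← Summable.tsum_finsetSum (fun s _ => habs s)]
          refine tsum_congr fun t => ?_
          rw [he, Finset.mul_sum]
  -- step A: bound LHS inner sums
  have hA : ∑ s, ∑ a, |d1 s * π1 s a - d2 s * π2 s a|
      ≤ ∑ s, (d1 s * c s + |d1 s - d2 s|) :=
    Finset.sum_le_sum fun s _ =>
      rowbound (d1 s) (d2 s) (π1 s) (π2 s) (hd1n s) ((hπ2 s).1) ((hπ2 s).2)
  -- assemble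
  have hRHS : (1 / (1 - γ)) * ∑ s, d1 s * ((1 / 2) * c s) = E / 2 := by
    have h1 : ∑ s, d1 s * ((1 / 2) * c s) = (1 / 2) * ∑ s, d1 s * c s := by
      rw [Finset.mul_sum]
      exact Finset.sum_congr rfl fun s _ => by ring
    rw [h1, hdc]
    field_simp
  have hLHS : ∑ s, ∑ a, |d1 s * π1 s a - d2 s * π2 s a| ≤ E := by
    have h2 : ∑ s, (d1 s * c s + |d1 s - d2 s|) = (1 - γ) * E + ∑ s, |d1 s - d2 s| := by
      rw [Finset.sum_add_distrib, hdc]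
    calc ∑ s, ∑ a, |d1 s * π1 s a - d2 s * π2 s a|
        ≤ (1 - γ) * E + ∑ s, |d1 s - d2 s| := by rw [← h2]; exact hA
      _ ≤ (1 - γ) * E + (1 - γ) * X := by linarith [hdd]
      _ ≤ (1 - γ) * E + γ * E := by linarith [hXE]
      _ = E := by ring
  calc (1 / 2) * ∑ s, ∑ a, |d1 s * π1 s a - d2 s * π2 s a| ≤ (1 / 2) * E := by linarith [hLHS]
    _ = E / 2 := by ring
    _ = (1 / (1 - γ)) * ∑ s, d1 s * ((1 / 2) * c s) := hRHS.symm
end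

section
/- Full OOD generalization bound: under the assumptions of the preceding statements (finite hypothesis class Π of policies, finite GMDP, rewards in [0,R_max], surrogate expert π̂_E, m i.i.d. training samples from training distribution S), with probability at least 1 − δ, SubOpt(π_E, π) ≤ (2R_max/(1−γ)²)·[ ε̂^S(π̂_E, π) + ε^S(π̂_E, π_E) + d1(T, S) + sqrt((log(2|Π|) + log(1/δ))/(2m)) ], where ε̂^S is the empirical expectation over the m samples of the TV distance, ε^S is the population expectation of TV under S, and d1 is the variation divergence between the initial state-goal distributions T and S. -/
/-- Expected discounted return of a goal-conditioned policy from `(s0, g)`. -/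
noncomputable def goalValue {S G A : Type*} [Fintype S] [Fintype A] [DecidableEq S]
    (P : S → A → S → ℝ) (r : S → A → G → ℝ) (γ : ℝ)
    (π : S → G → A → ℝ) (s0 : S) (g : G) : ℝ :=
  ∑' t : ℕ, γ ^ t * ∑ s, ∑ a, stateDist P (fun s' a => π s' g a) s0 t s * π s g a * r s a g

/-- Discounted state occupancy of policy `π` conditioned on goal `g`, from `s0`. -/
noncomputable def goalOcc {S G A : Type*} [Fintype S] [Fintype A] [DecidableEq S]
    (P : S → A → S → ℝ) (γ : ℝ) (π : S → G → A → ℝ) (s0 : S) (g : G) (s : S) : ℝ :=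
  (1 - γ) * ∑' t : ℕ, γ ^ t * stateDist P (fun s' a => π s' g a) s0 t s

/-- Expected (under the expert's occupancy from `(s0,g)`) total variation between two
goal-conditioned policies, as a function of the initial state-goal pair. -/
noncomputable def tvLoss {S G A : Type*} [Fintype S] [Fintype G] [Fintype A] [DecidableEq S]
    (P : S → A → S → ℝ) (γ : ℝ) (πE π1 π2 : S → G → A → ℝ) (p : S × G) : ℝ :=
  ∑ s, goalOcc P γ πE p.1 p.2 s * ((1 / 2) * ∑ a, |π1 s p.2 a - π2 s p.2 a|)

/-!
Per goal, a simulation lemma bounds `V^{π_E} - V^π` by `2 R_max / (1 - γ)²` times the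
expert-occupancy TV loss between `π_E` and `π`: the `ℓ¹` distance between the state-action
distributions of the two policies grows at each step by at most the policy gap along the state
distribution of `π_E`, and discounting turns these increments into a factor `1 / (1 - γ)`.
The triangle inequality through `π̂_E` splits that loss into two `[0, 1]`-valued losses; moving
the initial distribution from `T` to `S` costs `d1(T, S)` since their sum is at most `2`. Finally,
Hoeffding's inequality for the `m` i.i.d. samples from `S` shows that the population loss exceeds
the empirical one by `t` with probability at most `exp (-2 m t²)`, which is `≤ δ` for the chosen `t`.
-/

open Finset MeasureTheory ProbabilityTheory

lemma sum_ite_le_sum_ite {Ω : Type*} [Fintype Ω] {p q : Ω → Prop} [DecidablePred p]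
    [DecidablePred q] {w : Ω → ℝ} (hw : ∀ ω, 0 ≤ w ω) (hpq : ∀ ω, p ω → q ω) :
    (∑ ω, if p ω then w ω else 0) ≤ ∑ ω, if q ω then w ω else 0 :=
  sum_le_sum fun ω _ => by
    by_cases hp : p ω
    · rw [if_pos hp, if_pos (hpq ω hp)]
    · rw [if_neg hp]
      split_ifs
      exacts [hw ω, le_rfl]

section Simplex

variable {ι : Type*} [Fintype ι]

lemma sum_mul_mem_Icc_of_mem_stdSimplex {w f : ι → ℝ} {c : ℝ} (hw : w ∈ stdSimplex ℝ ι)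
    (hf : ∀ i, f i ∈ Set.Icc 0 c) : ∑ i, w i * f i ∈ Set.Icc 0 c := by
  refine ⟨sum_nonneg fun i _ => mul_nonneg (hw.1 i) (hf i).1, ?_⟩
  calc ∑ i, w i * f i ≤ ∑ i, w i * c :=
        sum_le_sum fun i _ => mul_le_mul_of_nonneg_left (hf i).2 (hw.1 i)
    _ = c := by rw [← sum_mul, hw.2, one_mul]

lemma sum_abs_sub_le_two_of_mem_stdSimplex {p q : ι → ℝ} (hp : p ∈ stdSimplex ℝ ι)
    (hq : q ∈ stdSimplex ℝ ι) : ∑ i, |p i - q i| ≤ 2 :=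
  calc ∑ i, |p i - q i| ≤ ∑ i, (p i + q i) :=
        sum_le_sum fun i _ => abs_sub_le_iff.2 ⟨by linarith [hq.1 i], by linarith [hp.1 i]⟩
    _ = 2 := by rw [sum_add_distrib, hp.2, hq.2]; norm_num

end Simplex

lemma sum_sub_mul_le_d1 {X : Type*} [Fintype X] (P Q F : X → ℝ) {c : ℝ}
    (hF : ∀ x, F x ∈ Set.Icc 0 c) : ∑ x, (P x - Q x) * F x ≤ c / 2 * d1 P Q := by
  classical
  -- `c < 0` is possible only for empty `X`.
  rcases isEmpty_or_nonempty X with _ | ⟨⟨x₀⟩⟩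
  · simp [d1]
  have hc : 0 ≤ c := (hF x₀).1.trans (hF x₀).2
  set J := univ.filter fun x => Q x ≤ P x
  have hJ : |∑ x ∈ J, (P x - Q x)| ≤ univ.powerset.sup' ⟨∅, empty_mem_powerset _⟩
      fun J => |∑ x ∈ J, (P x - Q x)| :=
    le_sup' (fun J => |∑ x ∈ J, (P x - Q x)|) (mem_powerset.2 (subset_univ J))
  calc ∑ x, (P x - Q x) * F x ≤ ∑ x, if Q x ≤ P x then c * (P x - Q x) else 0 :=
        sum_le_sum fun x _ => by
          obtain ⟨hF0, hFc⟩ := hF x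
          split_ifs <;> nlinarith
    _ = c * ∑ x ∈ J, (P x - Q x) := by rw [sum_ite, sum_const_zero, add_zero, mul_sum]
    _ ≤ c * |∑ x ∈ J, (P x - Q x)| := mul_le_mul_of_nonneg_left (le_abs_self _) hc
    _ ≤ c / 2 * d1 P Q := by rw [d1]; linarith [mul_le_mul_of_nonneg_left hJ hc]

section Discounting

variable {γ : ℝ}

lemma summable_pow_mul_of_abs_le (hγ0 : 0 ≤ γ) (hγ1 : γ < 1) {c : ℕ → ℝ} {C : ℝ}
    (hc : ∀ t, |c t| ≤ C) : Summable fun t => γ ^ t * c t :=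
  .of_norm_bounded ((summable_geometric_of_lt_one hγ0 hγ1).mul_right C) fun t => by
    rw [Real.norm_eq_abs, abs_mul, abs_of_nonneg (pow_nonneg hγ0 t)]
    exact mul_le_mul_of_nonneg_left (hc t) (pow_nonneg hγ0 t)

lemma one_sub_mul_tsum_le_of_le_add (hγ0 : 0 ≤ γ) {a d : ℕ → ℝ}
    (ha : Summable fun t => γ ^ t * a t) (hd : Summable fun t => γ ^ t * d t)
    (h0 : a 0 ≤ d 0) (hsucc : ∀ t, a (t + 1) ≤ a t + d (t + 1)) :
    (1 - γ) * ∑' t, γ ^ t * a t ≤ ∑' t, γ ^ t * d t := by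
  have hd' : Summable fun t => γ ^ (t + 1) * d (t + 1) := (summable_nat_add_iff 1).2 hd
  -- `A = a 0 + ∑ γ^(t+1) a (t+1) ≤ d 0 + γ A + (D - d 0)` for `A`, `D` the two series.
  have hshift : ∑' t, γ ^ (t + 1) * a (t + 1) ≤
      γ * ∑' t, γ ^ t * a t + ∑' t, γ ^ (t + 1) * d (t + 1) := by
    rw [← tsum_mul_left, ← (ha.mul_left γ).tsum_add hd']
    refine ((summable_nat_add_iff 1).2 ha).tsum_le_tsum (fun t => ?_) ((ha.mul_left γ).add hd')
    calc γ ^ (t + 1) * a (t + 1) ≤ γ ^ (t + 1) * (a t + d (t + 1)) :=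
          mul_le_mul_of_nonneg_left (hsucc t) (pow_nonneg hγ0 _)
      _ = γ * (γ ^ t * a t) + γ ^ (t + 1) * d (t + 1) := by ring
  have hA := ha.tsum_eq_zero_add
  have hD := hd.tsum_eq_zero_add
  simp only [pow_zero, one_mul] at hA hD
  linarith

end Discounting

section Hoeffding

lemma ProbabilityTheory.HasSubgaussianMGF.comp_eval {X : Type*} [MeasurableSpace X] {ν : Measure X}
    [IsProbabilityMeasure ν] {Z : X → ℝ} {c : NNReal} (h : HasSubgaussianMGF Z c ν) {m : ℕ}
    (i : Fin m) : HasSubgaussianMGF (fun ω : Fin m → X => Z (ω i)) c (Measure.pi fun _ => ν) := by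
  have hmap : (Measure.pi fun _ : Fin m => ν).map (fun ω => ω i) = ν :=
    (measurePreserving_eval _ i).map_eq
  exact .of_map (measurable_pi_apply i).aemeasurable (by rwa [hmap])

theorem measureReal_pi_sum_integral_sub_ge_le {X : Type*} [MeasurableSpace X] (ν : Measure X)
    [IsProbabilityMeasure ν] {f : X → ℝ} (hfm : Measurable f) (hf : ∀ x, f x ∈ Set.Icc 0 1)
    {m : ℕ} (hm : 0 < m) {t : ℝ} (ht : 0 ≤ t) :
    (Measure.pi fun _ : Fin m => ν).real {ω | m * t ≤ ∑ i, (ν[f] - f (ω i))} ≤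
      Real.exp (-(2 * m * t ^ 2)) := by
  have hZ : HasSubgaussianMGF (fun x => ν[f] - f x) ((‖ν[f] - (ν[f] - 1)‖₊ / 2) ^ 2) ν := by
    refine hasSubgaussianMGF_of_mem_Icc_of_integral_eq_zero (by fun_prop)
      (ae_of_all _ fun x => ⟨by linarith [(hf x).2], by linarith [(hf x).1]⟩) ?_
    rw [integral_sub (integrable_const _) (.of_mem_Icc 0 1 hfm.aemeasurable (ae_of_all _ hf)),
      integral_const, probReal_univ, one_smul, sub_self]
  refine (HasSubgaussianMGF.measure_sum_ge_le_of_iIndepFun (s := univ) (ε := m * t)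
    (iIndepFun_pi (X := fun (_ : Fin m) (x : X) => ν[f] - f x) (μ := fun _ => ν)
      fun _ => by fun_prop) (fun i _ => hZ.comp_eval i) (by positivity)).trans_eq ?_
  rw [sub_sub_cancel, nnnorm_one, sum_const, card_univ, Fintype.card_fin, nsmul_eq_mul]
  have hm' : (m : ℝ) ≠ 0 := by positivity
  congr 1
  push_cast
  field_simp

lemma measureReal_pi_eq_sum {X : Type*} [Fintype X] [MeasurableSpace X] [DiscreteMeasurableSpace X]
    (p : PMF X) (m : ℕ) (E : Set (Fin m → X)) [DecidablePred (· ∈ E)] :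
    (Measure.pi fun _ : Fin m => p.toMeasure).real E =
      ∑ ω, if ω ∈ E then ∏ i, (p (ω i)).toReal else 0 := by
  have hE : E = ↑(univ.filter (· ∈ E)) := by ext; simp
  conv_lhs => rw [hE, ← sum_measureReal_singleton]
  rw [← Finset.sum_filter]
  refine Finset.sum_congr rfl fun ω _ => ?_
  simp [measureReal_def, Measure.pi_singleton, ENNReal.toReal_prod,
    PMF.toMeasure_apply_singleton p _ (MeasurableSet.of_discrete)]

theorem hoeffding_fintype {X : Type*} [Fintype X] {w f : X → ℝ} (hw : w ∈ stdSimplex ℝ X)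
    (hf : ∀ x, f x ∈ Set.Icc 0 1) {m : ℕ} (hm : 0 < m) {t : ℝ} (ht : 0 ≤ t) :
    1 - Real.exp (-(2 * m * t ^ 2)) ≤ ∑ ω : Fin m → X,
      if ∑ x, w x * f x ≤ (1 / m) * ∑ i, f (ω i) + t then ∏ i, w (ω i) else 0 := by
  classical
  let _ : MeasurableSpace X := ⊤
  let p : PMF X := PMF.ofFintype (fun x => ENNReal.ofReal (w x)) (by
    rw [← ENNReal.ofReal_sum_of_nonneg fun x _ => hw.1 x, hw.2, ENNReal.ofReal_one])
  have hp (x : X) : (p x).toReal = w x := ENNReal.toReal_ofReal (hw.1 x)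
  have hmean : p.toMeasure[f] = ∑ x, w x * f x := by simp [PMF.integral_eq_sum, hp]
  set good := {ω : Fin m → X | ∑ x, w x * f x ≤ (1 / m) * ∑ i, f (ω i) + t}
  have hbad : goodᶜ ⊆ {ω | m * t ≤ ∑ i, (p.toMeasure[f] - f (ω i))} := by
    intro ω hω
    simp only [Set.mem_compl_iff, Set.mem_ofPred_eq, not_le, good, hmean] at hω ⊢
    rw [sum_sub_distrib, sum_const, card_univ, Fintype.card_fin, nsmul_eq_mul]
    have := mul_lt_mul_of_pos_left hω (by positivity : (0 : ℝ) < m)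
    field_simp at this
    linarith
  have htotal := measureReal_add_measureReal_compl (μ := Measure.pi fun _ : Fin m => p.toMeasure)
    (MeasurableSet.of_discrete (s := good))
  have hgood := measureReal_pi_eq_sum p m good
  simp only [probReal_univ] at htotal
  simp only [hp, good, Set.mem_ofPred_eq] at hgood
  linarith [measureReal_mono (μ := Measure.pi fun _ : Fin m => p.toMeasure) hbad,
    measureReal_pi_sum_integral_sub_ge_le p.toMeasure Measurable.of_discrete hf hm ht]

lemma exp_neg_two_mul_sq_sqrt_le {K δ : ℝ} (hK : 1 ≤ K) {m : ℕ} (hm : 0 < m) (hδ0 : 0 < δ)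
    (hδ1 : δ < 1) :
    Real.exp (-(2 * m * Real.sqrt ((Real.log K + Real.log (1 / δ)) / (2 * m)) ^ 2)) ≤ δ := by
  have hlogK : 0 ≤ Real.log K := Real.log_nonneg hK
  have hlogδ : 0 < Real.log (1 / δ) := Real.log_pos (by rw [lt_div_iff₀ hδ0]; linarith)
  have hm' : (0 : ℝ) < m := by exact_mod_cast hm
  rw [Real.sq_sqrt (by positivity), mul_div_cancel₀ _ (by positivity)]
  calc Real.exp (-(Real.log K + Real.log (1 / δ))) ≤ Real.exp (-Real.log (1 / δ)) :=
        Real.exp_le_exp.2 (by linarith)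
    _ = δ := by rw [Real.exp_neg, Real.exp_log (by positivity), one_div, inv_inv]

end Hoeffding

section MarkovChain

variable {S A : Type*} [Fintype S] [Fintype A]

lemma sum_sum_sum_mul_kernel {S' : Type*} [Fintype S'] {P : S → A → S' → ℝ}
    (hP : ∀ s a, ∑ s', P s a s' = 1) (x : S → A → ℝ) :
    ∑ s', ∑ s, ∑ a, x s a * P s a s' = ∑ s, ∑ a, x s a := by
  rw [sum_comm]
  refine sum_congr rfl fun s _ => ?_
  rw [sum_comm]
  simp_rw [← mul_sum, hP, mul_one]

lemma sum_abs_sum_sum_mul_kernel_le {S' : Type*} [Fintype S'] {P : S → A → S' → ℝ}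
    (hP : ∀ s a, P s a ∈ stdSimplex ℝ S') (x : S → A → ℝ) :
    ∑ s', |∑ s, ∑ a, x s a * P s a s'| ≤ ∑ s, ∑ a, |x s a| :=
  calc ∑ s', |∑ s, ∑ a, x s a * P s a s'| ≤ ∑ s', ∑ s, ∑ a, |x s a| * P s a s' := by
        refine sum_le_sum fun s' _ => (abs_sum_le_sum_abs _ _).trans (sum_le_sum fun s _ => ?_)
        refine (abs_sum_le_sum_abs _ _).trans_eq (sum_congr rfl fun a _ => ?_)
        rw [abs_mul, abs_of_nonneg ((hP s a).1 s')]
    _ = ∑ s, ∑ a, |x s a| := sum_sum_sum_mul_kernel (fun s a => (hP s a).2) _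

lemma sum_sum_abs_mul_sub_mul_le {p q : S → ℝ} {K L : S → A → ℝ} (hp : ∀ s, 0 ≤ p s)
    (hL : ∀ s, L s ∈ stdSimplex ℝ A) :
    ∑ s, ∑ a, |p s * K s a - q s * L s a| ≤
      ∑ s, |p s - q s| + ∑ s, p s * ∑ a, |K s a - L s a| := by
  rw [← sum_add_distrib]
  refine sum_le_sum fun s _ => ?_
  calc ∑ a, |p s * K s a - q s * L s a|
      ≤ ∑ a, (|p s - q s| * L s a + p s * |K s a - L s a|) := sum_le_sum fun a _ => by
        calc |p s * K s a - q s * L s a| = |(p s - q s) * L s a + p s * (K s a - L s a)| := by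
              congr 1; ring
          _ ≤ _ := by
              refine (abs_add_le _ _).trans_eq ?_
              rw [abs_mul, abs_mul, abs_of_nonneg ((hL s).1 a), abs_of_nonneg (hp s)]
    _ = |p s - q s| + p s * ∑ a, |K s a - L s a| := by
        rw [sum_add_distrib, ← mul_sum, ← mul_sum, (hL s).2, mul_one]

variable [DecidableEq S] {P : S → A → S → ℝ} {μ ν : S → A → ℝ}

lemma stateDist_mem_stdSimplex (hP : ∀ s a, P s a ∈ stdSimplex ℝ S)
    (hμ : ∀ s, μ s ∈ stdSimplex ℝ A) (s₀ : S) (t : ℕ) : stateDist P μ s₀ t ∈ stdSimplex ℝ S := by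
  induction t with
  | zero => exact ⟨fun s => by unfold stateDist; split_ifs <;> norm_num, by simp [stateDist]⟩
  | succ t ih =>
    refine ⟨fun s => sum_nonneg fun s' _ => sum_nonneg fun a _ =>
      mul_nonneg (mul_nonneg (ih.1 s') ((hμ s').1 a)) ((hP s' a).1 s), ?_⟩
    simp only [stateDist]
    rw [sum_sum_sum_mul_kernel fun s a => (hP s a).2]
    simp_rw [← mul_sum, (hμ _).2, mul_one]
    exact ih.2

variable (P μ ν) in
noncomputable def stateActionGap (s₀ : S) (t : ℕ) : ℝ :=
  ∑ s, ∑ a, |stateDist P μ s₀ t s * μ s a - stateDist P ν s₀ t s * ν s a|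

variable (P μ ν) in
noncomputable def policyGap (s₀ : S) (t : ℕ) : ℝ :=
  ∑ s, stateDist P μ s₀ t s * ∑ a, |μ s a - ν s a|

lemma sum_abs_stateDist_succ_sub_le (hP : ∀ s a, P s a ∈ stdSimplex ℝ S) (s₀ : S) (t : ℕ) :
    ∑ s, |stateDist P μ s₀ (t + 1) s - stateDist P ν s₀ (t + 1) s| ≤
      stateActionGap P μ ν s₀ t := by
  simp only [stateDist, ← sum_sub_distrib, ← sub_mul]
  exact sum_abs_sum_sum_mul_kernel_le hP _

lemma stateActionGap_le (hP : ∀ s a, P s a ∈ stdSimplex ℝ S) (hμ : ∀ s, μ s ∈ stdSimplex ℝ A)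
    (hν : ∀ s, ν s ∈ stdSimplex ℝ A) (s₀ : S) (t : ℕ) :
    stateActionGap P μ ν s₀ t ≤
      ∑ s, |stateDist P μ s₀ t s - stateDist P ν s₀ t s| + policyGap P μ ν s₀ t :=
  sum_sum_abs_mul_sub_mul_le (stateDist_mem_stdSimplex hP hμ s₀ t).1 hν

lemma stateActionGap_zero_le (hP : ∀ s a, P s a ∈ stdSimplex ℝ S)
    (hμ : ∀ s, μ s ∈ stdSimplex ℝ A) (hν : ∀ s, ν s ∈ stdSimplex ℝ A) (s₀ : S) :
    stateActionGap P μ ν s₀ 0 ≤ policyGap P μ ν s₀ 0 := by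
  simpa [stateDist] using stateActionGap_le hP hμ hν s₀ 0

lemma stateActionGap_succ_le (hP : ∀ s a, P s a ∈ stdSimplex ℝ S)
    (hμ : ∀ s, μ s ∈ stdSimplex ℝ A) (hν : ∀ s, ν s ∈ stdSimplex ℝ A) (s₀ : S) (t : ℕ) :
    stateActionGap P μ ν s₀ (t + 1) ≤ stateActionGap P μ ν s₀ t + policyGap P μ ν s₀ (t + 1) :=
  (stateActionGap_le hP hμ hν s₀ (t + 1)).trans
    (add_le_add (sum_abs_stateDist_succ_sub_le hP s₀ t) le_rfl)

lemma policyGap_mem_Icc (hP : ∀ s a, P s a ∈ stdSimplex ℝ S) (hμ : ∀ s, μ s ∈ stdSimplex ℝ A)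
    (hν : ∀ s, ν s ∈ stdSimplex ℝ A) (s₀ : S) (t : ℕ) : policyGap P μ ν s₀ t ∈ Set.Icc 0 2 :=
  sum_mul_mem_Icc_of_mem_stdSimplex (stateDist_mem_stdSimplex hP hμ s₀ t) fun s =>
    ⟨sum_nonneg fun _ _ => abs_nonneg _, sum_abs_sub_le_two_of_mem_stdSimplex (hμ s) (hν s)⟩

theorem one_sub_mul_tsum_reward_sub_le (hP : ∀ s a, P s a ∈ stdSimplex ℝ S)
    (hμ : ∀ s, μ s ∈ stdSimplex ℝ A) (hν : ∀ s, ν s ∈ stdSimplex ℝ A) {r : S → A → ℝ}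
    {Rmax : ℝ} (hR : 0 ≤ Rmax) (hr : ∀ s a, r s a ∈ Set.Icc 0 Rmax) {γ : ℝ} (hγ0 : 0 ≤ γ)
    (hγ1 : γ < 1) (s₀ : S) :
    (1 - γ) * ((∑' t, γ ^ t * ∑ s, ∑ a, stateDist P μ s₀ t s * μ s a * r s a) -
      ∑' t, γ ^ t * ∑ s, ∑ a, stateDist P ν s₀ t s * ν s a * r s a) ≤
      Rmax * ∑' t, γ ^ t * policyGap P μ ν s₀ t := by
  have hreward (κ : S → A → ℝ) (hκ : ∀ s, κ s ∈ stdSimplex ℝ A) (t : ℕ) :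
      |∑ s, ∑ a, stateDist P κ s₀ t s * κ s a * r s a| ≤ Rmax := by
    simp_rw [mul_assoc, ← mul_sum]
    have := sum_mul_mem_Icc_of_mem_stdSimplex (stateDist_mem_stdSimplex hP hκ s₀ t)
      fun s => sum_mul_mem_Icc_of_mem_stdSimplex (hκ s) (hr s)
    rw [abs_of_nonneg this.1]
    exact this.2
  have hreward_sub (t : ℕ) :
      ∑ s, ∑ a, stateDist P μ s₀ t s * μ s a * r s a -
        ∑ s, ∑ a, stateDist P ν s₀ t s * ν s a * r s a ≤ Rmax * stateActionGap P μ ν s₀ t := by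
    simp_rw [stateActionGap, mul_sum, ← sum_sub_distrib, ← sub_mul]
    refine sum_le_sum fun s _ => sum_le_sum fun a _ => ?_
    obtain ⟨hr0, hrR⟩ := hr s a
    nlinarith [le_abs_self (stateDist P μ s₀ t s * μ s a - stateDist P ν s₀ t s * ν s a),
      abs_nonneg (stateDist P μ s₀ t s * μ s a - stateDist P ν s₀ t s * ν s a)]
  have hgap (t : ℕ) : |stateActionGap P μ ν s₀ t| ≤ 4 := by
    rw [abs_of_nonneg (sum_nonneg fun _ _ => sum_nonneg fun _ _ => abs_nonneg _)]
    linarith [stateActionGap_le hP hμ hν s₀ t, (policyGap_mem_Icc hP hμ hν s₀ t).2,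
      sum_abs_sub_le_two_of_mem_stdSimplex (stateDist_mem_stdSimplex hP hμ s₀ t)
        (stateDist_mem_stdSimplex hP hν s₀ t)]
  have hsμ := summable_pow_mul_of_abs_le hγ0 hγ1 (hreward μ hμ)
  have hsν := summable_pow_mul_of_abs_le hγ0 hγ1 (hreward ν hν)
  have hsgap := summable_pow_mul_of_abs_le hγ0 hγ1 hgap
  have hspol := summable_pow_mul_of_abs_le hγ0 hγ1 (C := 2) fun t => by
    obtain ⟨h0, h2⟩ := policyGap_mem_Icc hP hμ hν s₀ t
    rwa [abs_of_nonneg h0]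
  calc (1 - γ) * ((∑' t, γ ^ t * ∑ s, ∑ a, stateDist P μ s₀ t s * μ s a * r s a) -
        ∑' t, γ ^ t * ∑ s, ∑ a, stateDist P ν s₀ t s * ν s a * r s a)
      ≤ (1 - γ) * ∑' t, γ ^ t * (Rmax * stateActionGap P μ ν s₀ t) := by
        rw [← hsμ.tsum_sub hsν]
        refine mul_le_mul_of_nonneg_left ((hsμ.sub hsν).tsum_le_tsum (fun t => ?_)
          (hsgap.mul_left Rmax |>.congr fun t => by ring)) (by linarith)
        rw [← mul_sub]
        exact mul_le_mul_of_nonneg_left (hreward_sub t) (pow_nonneg hγ0 t)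
    _ = Rmax * ((1 - γ) * ∑' t, γ ^ t * stateActionGap P μ ν s₀ t) := by
        simp_rw [mul_left_comm _ Rmax, tsum_mul_left]
        ring
    _ ≤ Rmax * ∑' t, γ ^ t * policyGap P μ ν s₀ t :=
        mul_le_mul_of_nonneg_left (one_sub_mul_tsum_le_of_le_add hγ0 hsgap hspol
          (stateActionGap_zero_le hP hμ hν s₀) (stateActionGap_succ_le hP hμ hν s₀)) hR

end MarkovChain

section GoalConditioned

variable {S G A : Type*} [Fintype S] [Fintype A] [DecidableEq S] {P : S → A → S → ℝ} {γ : ℝ}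
  {πE : S → G → A → ℝ}

lemma sum_goalOcc_mul (hP : ∀ s a, P s a ∈ stdSimplex ℝ S) (hπE : ∀ s g, πE s g ∈ stdSimplex ℝ A)
    (hγ0 : 0 ≤ γ) (hγ1 : γ < 1) (s₀ : S) (g : G) (c : S → ℝ) :
    ∑ s, goalOcc P γ πE s₀ g s * c s =
      (1 - γ) * ∑' t, γ ^ t * ∑ s, stateDist P (fun s' a => πE s' g a) s₀ t s * c s := by
  have hρ := stateDist_mem_stdSimplex hP (fun s => hπE s g) s₀
  have hsum (s : S) :
      Summable fun t => γ ^ t * (stateDist P (fun s' a => πE s' g a) s₀ t s * c s) :=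
    summable_pow_mul_of_abs_le hγ0 hγ1 fun t => by
      rw [abs_mul, abs_of_nonneg ((hρ t).1 s)]
      exact mul_le_of_le_one_left (abs_nonneg _) (stdSimplex.le_one ⟨_, hρ t⟩ s)
  simp_rw [goalOcc, mul_assoc, ← tsum_mul_right, mul_assoc, ← mul_sum,
    ← Summable.tsum_finsetSum fun s _ => hsum s, mul_sum]

lemma goalOcc_mem_stdSimplex (hP : ∀ s a, P s a ∈ stdSimplex ℝ S)
    (hπE : ∀ s g, πE s g ∈ stdSimplex ℝ A) (hγ0 : 0 ≤ γ) (hγ1 : γ < 1) (s₀ : S) (g : G) :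
    goalOcc P γ πE s₀ g ∈ stdSimplex ℝ S := by
  have hρ := stateDist_mem_stdSimplex hP (fun s => hπE s g) s₀
  refine ⟨fun s => mul_nonneg (by linarith) (tsum_nonneg fun t =>
    mul_nonneg (pow_nonneg hγ0 t) ((hρ t).1 s)), ?_⟩
  have h := sum_goalOcc_mul hP hπE hγ0 hγ1 s₀ g 1
  simp only [Pi.one_apply, mul_one] at h
  simp_rw [h, (hρ _).2, mul_one, tsum_geometric_of_lt_one hγ0 hγ1]
  field_simp [(by linarith : (1 - γ) ≠ 0)]

variable [Fintype G]

lemma tvLoss_mem_Icc (hP : ∀ s a, P s a ∈ stdSimplex ℝ S) (hπE : ∀ s g, πE s g ∈ stdSimplex ℝ A)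
    (hγ0 : 0 ≤ γ) (hγ1 : γ < 1) {π₁ π₂ : S → G → A → ℝ} (hπ₁ : ∀ s g, π₁ s g ∈ stdSimplex ℝ A)
    (hπ₂ : ∀ s g, π₂ s g ∈ stdSimplex ℝ A) (p : S × G) :
    tvLoss P γ πE π₁ π₂ p ∈ Set.Icc 0 1 :=
  sum_mul_mem_Icc_of_mem_stdSimplex (goalOcc_mem_stdSimplex hP hπE hγ0 hγ1 p.1 p.2) fun s =>
    ⟨by positivity, by linarith [sum_abs_sub_le_two_of_mem_stdSimplex (hπ₁ s p.2) (hπ₂ s p.2)]⟩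

lemma tvLoss_le_add (hP : ∀ s a, P s a ∈ stdSimplex ℝ S) (hπE : ∀ s g, πE s g ∈ stdSimplex ℝ A)
    (hγ0 : 0 ≤ γ) (hγ1 : γ < 1) (π₁ π₂ π₃ : S → G → A → ℝ) (p : S × G) :
    tvLoss P γ πE π₁ π₃ p ≤ tvLoss P γ πE π₂ π₃ p + tvLoss P γ πE π₂ π₁ p := by
  simp_rw [tvLoss, ← sum_add_distrib, ← mul_add, ← sum_add_distrib]
  refine sum_le_sum fun s _ => mul_le_mul_of_nonneg_left ?_
    ((goalOcc_mem_stdSimplex hP hπE hγ0 hγ1 p.1 p.2).1 s)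
  refine mul_le_mul_of_nonneg_left (sum_le_sum fun a _ => ?_) (by norm_num)
  rw [abs_sub_comm (π₂ s p.2 a) (π₁ s p.2 a), add_comm]
  exact abs_sub_le _ _ _

lemma tvLoss_self_eq (hP : ∀ s a, P s a ∈ stdSimplex ℝ S) (hπE : ∀ s g, πE s g ∈ stdSimplex ℝ A)
    (hγ0 : 0 ≤ γ) (hγ1 : γ < 1) (π : S → G → A → ℝ) (s₀ : S) (g : G) :
    tvLoss P γ πE πE π (s₀, g) = (1 - γ) / 2 *
      ∑' t, γ ^ t * policyGap P (fun s a => πE s g a) (fun s a => π s g a) s₀ t := by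
  rw [tvLoss, sum_goalOcc_mul hP hπE hγ0 hγ1]
  simp_rw [policyGap, mul_left_comm _ (1 / 2 : ℝ), ← mul_sum, mul_left_comm _ (1 / 2 : ℝ),
    tsum_mul_left]
  ring

theorem goalValue_sub_le (hP : ∀ s a, P s a ∈ stdSimplex ℝ S)
    (hπE : ∀ s g, πE s g ∈ stdSimplex ℝ A) {π : S → G → A → ℝ}
    (hπ : ∀ s g, π s g ∈ stdSimplex ℝ A) {r : S → A → G → ℝ} {Rmax : ℝ} (hR : 0 ≤ Rmax)
    (hr : ∀ s a g, r s a g ∈ Set.Icc 0 Rmax) (hγ0 : 0 ≤ γ) (hγ1 : γ < 1) (s₀ : S) (g : G) :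
    goalValue P r γ πE s₀ g - goalValue P r γ π s₀ g ≤
      2 * Rmax / (1 - γ) ^ 2 * tvLoss P γ πE πE π (s₀, g) := by
  have h := one_sub_mul_tsum_reward_sub_le hP (fun s => hπE s g) (fun s => hπ s g) hR
    (fun s a => hr s a g) hγ0 hγ1 s₀
  rw [tvLoss_self_eq hP hπE hγ0 hγ1]
  have hγ : 0 < 1 - γ := by linarith
  calc goalValue P r γ πE s₀ g - goalValue P r γ π s₀ g
      ≤ Rmax * (∑' t, γ ^ t * policyGap P (fun s a => πE s g a) (fun s a => π s g a) s₀ t) /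
        (1 - γ) := by rw [le_div_iff₀ hγ, mul_comm]; exact h
    _ = _ := by field_simp

theorem sum_mul_goalValue_sub_le (hP : ∀ s a, P s a ∈ stdSimplex ℝ S)
    (hπE : ∀ s g, πE s g ∈ stdSimplex ℝ A) {π πhatE : S → G → A → ℝ}
    (hπ : ∀ s g, π s g ∈ stdSimplex ℝ A) (hπhatE : ∀ s g, πhatE s g ∈ stdSimplex ℝ A)
    {r : S → A → G → ℝ} {Rmax : ℝ} (hR : 0 ≤ Rmax) (hr : ∀ s a g, r s a g ∈ Set.Icc 0 Rmax)
    (hγ0 : 0 ≤ γ) (hγ1 : γ < 1) (PS : S × G → ℝ) {PT : S × G → ℝ} (hPT : ∀ p, 0 ≤ PT p) :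
    ∑ p, PT p * (goalValue P r γ πE p.1 p.2 - goalValue P r γ π p.1 p.2) ≤
      2 * Rmax / (1 - γ) ^ 2 * (∑ p, PS p * tvLoss P γ πE πhatE π p +
        ∑ p, PS p * tvLoss P γ πE πhatE πE p + d1 PT PS) := by
  set C := 2 * Rmax / (1 - γ) ^ 2
  have hC : 0 ≤ C := by positivity
  set F := fun p => tvLoss P γ πE πhatE π p + tvLoss P γ πE πhatE πE p
  have hF (p : S × G) : F p ∈ Set.Icc 0 2 := by
    have h₁ := tvLoss_mem_Icc hP hπE hγ0 hγ1 hπhatE hπ p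
    have h₂ := tvLoss_mem_Icc hP hπE hγ0 hγ1 hπhatE hπE p
    exact ⟨add_nonneg h₁.1 h₂.1, by linarith [h₁.2, h₂.2]⟩
  calc ∑ p, PT p * (goalValue P r γ πE p.1 p.2 - goalValue P r γ π p.1 p.2)
      ≤ ∑ p, PT p * (C * F p) := sum_le_sum fun p _ => mul_le_mul_of_nonneg_left
        ((goalValue_sub_le hP hπE hπ hR hr hγ0 hγ1 p.1 p.2).trans
          (mul_le_mul_of_nonneg_left (tvLoss_le_add hP hπE hγ0 hγ1 πE πhatE π p) hC)) (hPT p)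
    _ = C * (∑ p, PS p * F p + ∑ p, (PT p - PS p) * F p) := by
        rw [← sum_add_distrib, mul_sum]
        exact sum_congr rfl fun p _ => by ring
    _ ≤ C * (∑ p, PS p * F p + d1 PT PS) := by
        gcongr
        linarith [sum_sub_mul_le_d1 PT PS F hF]
    _ = C * (∑ p, PS p * tvLoss P γ πE πhatE π p +
        ∑ p, PS p * tvLoss P γ πE πhatE πE p + d1 PT PS) := by
        simp only [F, mul_add, sum_add_distrib]

end GoalConditioned


open scoped Classical in
/-- Full OOD generalization bound: with probability at least `1 − δ` over `m` i.i.d.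
training state-goal pairs drawn from the training distribution `PS`, the suboptimality of
`π` (from a finite hypothesis class `Hyp`) on the testing distribution `PT` is bounded by
`(2R_max/(1−γ)²)` times the sum of the empirical imitation loss to the surrogate expert
`π̂_E`, the expert estimation gap, the distribution shift `d1(T,S)`, and the finite-class
estimation error term. -/
theorem stmt13 {S G A : Type*} [Fintype S] [Fintype G] [Fintype A] [DecidableEq S]
    (P : S → A → S → ℝ) (r : S → A → G → ℝ) (Rmax γ : ℝ)
    (hR : 0 ≤ Rmax) (hr : ∀ s a g, 0 ≤ r s a g ∧ r s a g ≤ Rmax)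
    (hγ0 : 0 ≤ γ) (hγ1 : γ < 1)
    (hP : ∀ s a, (∀ s', 0 ≤ P s a s') ∧ ∑ s', P s a s' = 1)
    (π πhatE πE : S → G → A → ℝ)
    (hπ : ∀ s g, (∀ a, 0 ≤ π s g a) ∧ ∑ a, π s g a = 1)
    (hπhatE : ∀ s g, (∀ a, 0 ≤ πhatE s g a) ∧ ∑ a, πhatE s g a = 1)
    (hπE : ∀ s g, (∀ a, 0 ≤ πE s g a) ∧ ∑ a, πE s g a = 1)
    (Hyp : Finset (S → G → A → ℝ)) (hπHyp : π ∈ Hyp)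
    (PS PT : S × G → ℝ)
    (hPS : (∀ p, 0 ≤ PS p) ∧ ∑ p, PS p = 1)
    (hPT : (∀ p, 0 ≤ PT p) ∧ ∑ p, PT p = 1)
    (m : ℕ) (hm : 0 < m) (δ : ℝ) (hδ0 : 0 < δ) (hδ1 : δ < 1) :
    1 - δ ≤
      ∑ ω : Fin m → S × G,
        (if ∑ p : S × G, PT p * (goalValue P r γ πE p.1 p.2 - goalValue P r γ π p.1 p.2) ≤
            (2 * Rmax / (1 - γ) ^ 2) *
              ((1 / (m : ℝ)) * (∑ i, tvLoss P γ πE πhatE π (ω i)) +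
                (∑ p : S × G, PS p * tvLoss P γ πE πhatE πE p) +
                d1 PT PS +
                Real.sqrt ((Real.log (2 * (Hyp.card : ℝ)) + Real.log (1 / δ)) / (2 * m)))
          then ∏ i, PS (ω i) else 0) := by
  have hcard : 1 ≤ 2 * (Hyp.card : ℝ) := by
    have : (1 : ℝ) ≤ Hyp.card := by exact_mod_cast card_pos.2 ⟨π, hπHyp⟩
    linarith
  calc 1 - δ ≤ 1 - Real.exp (-(2 * m * Real.sqrt ((Real.log (2 * (Hyp.card : ℝ)) +
        Real.log (1 / δ)) / (2 * m)) ^ 2)) := by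
        linarith [exp_neg_two_mul_sq_sqrt_le hcard hm hδ0 hδ1]
    _ ≤ _ := hoeffding_fintype hPS (tvLoss_mem_Icc hP hπE hγ0 hγ1 hπhatE hπ) hm (Real.sqrt_nonneg _)
    _ ≤ _ := sum_ite_le_sum_ite (fun ω => prod_nonneg fun i _ => hPS.1 (ω i)) fun ω hω =>
        (sum_mul_goalValue_sub_le hP hπE hπ hπhatE hR hr hγ0 hγ1 PS hPT.1).trans
          (mul_le_mul_of_nonneg_left (by linarith) (by positivity))
end
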